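/- Let μ be a compactly supported Borel probability measure on ℝ and let D_μ := sup{|x - y| : x, y ∈ supp(μ)} be the diameter of its support. Then for every t > 0 with t² ≥ (3√10/2)·D_μ (equivalently t ≥ (90/4)^{1/4}·D_μ^{1/2}), the function ℓ_{μ,t}(x) = ∫_ℝ h_t(x-y) dμ(y) is unimodal; consequently the convolution μ * L_t is unimodal for all such t. -/

import Mathlib

/-!
The kernel `h_t` increases up to its mode `t²/3` and decreases after it, and on the window
`[t²/3 - D, t²/3 + D]` its second derivative `h_t(u) (15u² - 10t²u + t⁴) / (4u⁴)` is nonpositive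
once `t² ≥ (3√10/2) D`. With `supp μ ⊆ [b, B]` and `B - b = D`, for `x ≤ b + t²/3`
(resp. `x ≥ B + t²/3`) every translate `h_t(x - y)`, `y ∈ supp μ`, is on the increasing
(resp. decreasing) branch, so `ℓ_{μ,t}` is monotone there; in between all `x - y` lie in the
window, so `ℓ_{μ,t}` is concave and continuous on `[b + t²/3, B + t²/3]`, and a maximiser there
is a mode.
-/

open MeasureTheory Real Set Filter Topology

/-- A function `f : ℝ → ℝ` is unimodal if there is a mode `a` such that `f` is
nondecreasing on `(-∞, a]` and nonincreasing on `[a, ∞)`. -/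
def Unimodal (f : ℝ → ℝ) : Prop :=
  ∃ a : ℝ, MonotoneOn f (Set.Iic a) ∧ AntitoneOn f (Set.Ici a)

/-- The topological support of a Borel measure on `ℝ`: the set of points all of whose
neighbourhoods have positive measure. -/
def measureSupport (μ : Measure ℝ) : Set ℝ := {x | ∀ U ∈ nhds x, 0 < μ U}

/-- The density kernel of the Lévy distribution (one-sided `1/2`-stable law) of parameter `t`,
up to the constant factor `t/√(2π)`: `u ↦ u^{-3/2} exp(-t²/(2u))` for `u > 0`, and `0` otherwise. -/
noncomputable def levyKernel (t u : ℝ) : ℝ :=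
  if 0 < u then u ^ (-(3 : ℝ) / 2) * Real.exp (-t ^ 2 / (2 * u)) else 0

section Unimodal

variable {f : ℝ → ℝ} {s : Set ℝ} {a : ℝ}

theorem ConcaveOn.monotoneOn_of_isMaxOn (hf : ConcaveOn ℝ s f) (has : a ∈ s)
    (ha : IsMaxOn f s a) : MonotoneOn f (s ∩ Iic a) := by
  intro u hu v hv huv
  have hv_mem : v ∈ segment ℝ u a := by rw [segment_eq_Icc (huv.trans hv.2)]; exact ⟨huv, hv.2⟩
  calc f u = min (f u) (f a) := (min_eq_left (ha hu.1)).symm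
    _ ≤ f v := hf.min_le_of_mem_segment hu.1 has hv_mem

theorem ConcaveOn.antitoneOn_of_isMaxOn (hf : ConcaveOn ℝ s f) (has : a ∈ s)
    (ha : IsMaxOn f s a) : AntitoneOn f (s ∩ Ici a) := by
  intro u hu v hv huv
  have hu_mem : u ∈ segment ℝ a v := by rw [segment_eq_Icc (hu.2.trans huv)]; exact ⟨hu.2, huv⟩
  calc f v = min (f a) (f v) := (min_eq_right (ha hv.1)).symm
    _ ≤ f u := hf.min_le_of_mem_segment has hv.1 hu_mem

theorem unimodal_of_concaveOn_Icc {p q : ℝ} (h_mono : MonotoneOn f (Iic p))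
    (h_anti : AntitoneOn f (Ici q)) (h_conc : ConcaveOn ℝ (Icc p q) f)
    (h_cont : ContinuousOn f (Icc p q)) : Unimodal f := by
  rcases lt_or_ge q p with hqp | hpq
  · exact ⟨q, h_mono.mono (Iic_subset_Iic.2 hqp.le), h_anti⟩
  obtain ⟨a, ha, hmax⟩ := isCompact_Icc.exists_isMaxOn (nonempty_Icc.2 hpq) h_cont
  refine ⟨a, ?_, ?_⟩
  · refine (h_mono.union_right (h_conc.monotoneOn_of_isMaxOn ha hmax) isGreatest_Iic
      ⟨⟨left_mem_Icc.2 hpq, ha.1⟩, fun x hx => hx.1.1⟩).mono fun x hx => ?_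
    rcases le_total x p with hxp | hpx
    exacts [Or.inl hxp, Or.inr ⟨⟨hpx, hx.out.trans ha.2⟩, hx⟩]
  · refine ((h_conc.antitoneOn_of_isMaxOn ha hmax).union_right h_anti
      ⟨⟨right_mem_Icc.2 hpq, ha.2⟩, fun x hx => hx.1.2⟩ isLeast_Ici).mono fun x hx => ?_
    rcases le_total x q with hxq | hqx
    exacts [Or.inl ⟨⟨ha.1.trans hx.out, hxq⟩, hx⟩, Or.inr hqx]

end Unimodal

theorem concaveOn_integral {α E : Type*} [MeasurableSpace α] {μ : Measure α} [AddCommGroup E]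
    [Module ℝ E] {s : Set E} {F : E → α → ℝ} (hs : Convex ℝ s)
    (hF_int : ∀ x ∈ s, Integrable (F x) μ) (hF_conc : ∀ᵐ y ∂μ, ConcaveOn ℝ s (F · y)) :
    ConcaveOn ℝ s (fun x => ∫ y, F x y ∂μ) := by
  refine ⟨hs, fun x hx z hz a c ha hc hac => ?_⟩
  calc a * ∫ y, F x y ∂μ + c * ∫ y, F z y ∂μ = ∫ y, (a * F x y + c * F z y) ∂μ := by
        rw [integral_add ((hF_int x hx).const_mul a) ((hF_int z hz).const_mul c),
          integral_const_mul, integral_const_mul]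
    _ ≤ ∫ y, F (a • x + c • z) y ∂μ :=
        integral_mono_ae (((hF_int x hx).const_mul a).add ((hF_int z hz).const_mul c))
          (hF_int _ (hs hx hz ha hc hac)) (hF_conc.mono fun y hy => hy.2 hx hz ha hc hac)

theorem ae_mem_measureSupport (μ : Measure ℝ) : ∀ᵐ y ∂μ, y ∈ measureSupport μ := by
  have : measureSupport μ = μ.support := by ext x; exact (Measure.mem_support_iff_forall x).symm
  exact this ▸ Measure.support_mem_ae

section Convolution

variable {μ : Measure ℝ} {k : ℝ → ℝ} {m b B : ℝ}

theorem unimodal_integral_comp_sub [IsFiniteMeasure μ] (hμ : ∀ᵐ y ∂μ, y ∈ Icc b B)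
    (hk_meas : Measurable k) (hk_nonneg : 0 ≤ k) (hk_mono : MonotoneOn k (Iic m))
    (hk_anti : AntitoneOn k (Ici m))
    (hk_conc : ConcaveOn ℝ (Icc (m - (B - b)) (m + (B - b))) k)
    (hk_cont : ContinuousOn k (Icc (m - (B - b)) (m + (B - b)))) :
    Unimodal (fun x => ∫ y, k (x - y) ∂μ) := by
  have hk_le : ∀ u, k u ≤ k m := fun u => (le_total u m).elim
    (fun h => hk_mono h self_mem_Iic h) (fun h => hk_anti self_mem_Ici h h)
  have h_meas : ∀ x, AEStronglyMeasurable (fun y => k (x - y)) μ := fun x =>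
    (hk_meas.comp (measurable_const.sub measurable_id)).aestronglyMeasurable
  have h_bound : ∀ x, ∀ᵐ y ∂μ, ‖k (x - y)‖ ≤ k m := fun x => ae_of_all _ fun y => by
    rw [Real.norm_of_nonneg (hk_nonneg _)]
    exact hk_le _
  have h_int : ∀ x, Integrable (fun y => k (x - y)) μ := fun x =>
    (integrable_const (k m)).mono' (h_meas x) (h_bound x)
  have h_window : ∀ y ∈ Icc b B,
      MapsTo (· - y) (Icc (b + m) (B + m)) (Icc (m - (B - b)) (m + (B - b))) :=
    fun y hy x hx => ⟨by linarith [hx.1, hy.2], by linarith [hx.2, hy.1]⟩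
  apply unimodal_of_concaveOn_Icc (p := b + m) (q := B + m)
  · intro x₁ _ x₂ hx₂ hx
    refine integral_mono_ae (h_int x₁) (h_int x₂) (hμ.mono fun y hy => ?_)
    exact hk_mono (show x₁ - y ≤ m by linarith [hy.1, hx₂.out])
      (show x₂ - y ≤ m by linarith [hy.1, hx₂.out]) (by linarith)
  · intro x₁ hx₁ x₂ _ hx
    refine integral_mono_ae (h_int x₂) (h_int x₁) (hμ.mono fun y hy => ?_)
    exact hk_anti (show m ≤ x₁ - y by linarith [hy.2, hx₁.out])
      (show m ≤ x₂ - y by linarith [hy.2, hx₁.out]) (by linarith)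
  · refine concaveOn_integral (convex_Icc _ _) (fun x _ => h_int x) (hμ.mono fun y hy => ?_)
    refine (hk_conc.translate_left (-y)).subset (fun x hx => ?_) (convex_Icc _ _)
    simpa only [mem_preimage, neg_add_eq_sub] using h_window y hy hx
  · exact continuousOn_of_dominated (fun x _ => h_meas x) (fun x _ => h_bound x)
      (integrable_const _) (hμ.mono fun y hy =>
        hk_cont.comp (continuousOn_id.sub continuousOn_const) (h_window y hy))

end Convolution

section LevyKernel

variable {t u d : ℝ}

theorem levyKernel_of_nonpos (hu : u ≤ 0) : levyKernel t u = 0 := if_neg hu.not_gt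

theorem levyKernel_nonneg (t u : ℝ) : 0 ≤ levyKernel t u := by
  unfold levyKernel
  split_ifs with hu
  exacts [mul_nonneg (rpow_nonneg hu.le _) (exp_nonneg _), le_rfl]

theorem measurable_levyKernel (t : ℝ) : Measurable (levyKernel t) :=
  Measurable.ite measurableSet_Ioi (by fun_prop) measurable_const

theorem levyKernel_eq_exp (hu : 0 < u) :
    levyKernel t u = exp (-(3 / 2) * log u - t ^ 2 / (2 * u)) := by
  rw [levyKernel, if_pos hu, rpow_def_of_pos hu, ← exp_add]
  ring_nf

theorem hasDerivAt_levyKernel (hu : 0 < u) :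
    HasDerivAt (levyKernel t) (levyKernel t u * ((t ^ 2 - 3 * u) / (2 * u ^ 2))) u := by
  have h_exp : HasDerivAt (fun v => exp (-(3 / 2) * log v - t ^ 2 / (2 * v)))
      (exp (-(3 / 2) * log u - t ^ 2 / (2 * u)) * ((t ^ 2 - 3 * u) / (2 * u ^ 2))) u := by
    refine HasDerivAt.exp <| (((hasDerivAt_log hu.ne').const_mul (-(3 / 2))).fun_sub
      ((hasDerivAt_const u (t ^ 2)).fun_div ((hasDerivAt_id' u).const_mul 2)
        (by positivity))).congr_deriv ?_
    field_simp
    ring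
  rw [levyKernel_eq_exp hu]
  exact h_exp.congr_of_eventuallyEq <|
    (eventually_gt_nhds hu).mono fun v hv => levyKernel_eq_exp hv

theorem hasDerivAt_levyKernel_deriv (hu : 0 < u) :
    HasDerivAt (fun v => levyKernel t v * ((t ^ 2 - 3 * v) / (2 * v ^ 2)))
      (levyKernel t u * ((15 * u ^ 2 - 10 * t ^ 2 * u + t ^ 4) / (4 * u ^ 4))) u := by
  have h_rat : HasDerivAt (fun v => (t ^ 2 - 3 * v) / (2 * v ^ 2))
      ((6 * u ^ 2 - 4 * t ^ 2 * u) / (4 * u ^ 4)) u := by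
    refine (((hasDerivAt_const u (t ^ 2)).fun_sub ((hasDerivAt_id' u).const_mul 3)).fun_div
      ((hasDerivAt_pow 2 u).const_mul 2) (by positivity)).congr_deriv ?_
    field_simp
    ring
  refine ((hasDerivAt_levyKernel hu).fun_mul h_rat).congr_deriv ?_
  field_simp
  ring

theorem continuousOn_levyKernel : ContinuousOn (levyKernel t) (Ioi 0) :=
  fun _ hu => (hasDerivAt_levyKernel hu).continuousAt.continuousWithinAt

theorem levyKernel_monotoneOn : MonotoneOn (levyKernel t) (Iic (t ^ 2 / 3)) := by
  have h_pos : MonotoneOn (levyKernel t) (Ioc 0 (t ^ 2 / 3)) := by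
    refine monotoneOn_of_hasDerivWithinAt_nonneg (convex_Ioc _ _)
      (continuousOn_levyKernel.mono Ioc_subset_Ioi_self)
      (fun u hu => (hasDerivAt_levyKernel (interior_subset hu).1).hasDerivWithinAt)
      (fun u hu => ?_)
    rw [interior_Ioc] at hu
    exact mul_nonneg (levyKernel_nonneg _ _) (div_nonneg (by linarith [hu.2]) (by positivity))
  intro u hu v hv huv
  rcases le_or_gt u 0 with hu0 | hu0
  · exact (levyKernel_of_nonpos hu0).trans_le (levyKernel_nonneg _ _)
  · exact h_pos ⟨hu0, hu⟩ ⟨hu0.trans_le huv, hv⟩ huv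

theorem levyKernel_antitoneOn (ht : t ≠ 0) : AntitoneOn (levyKernel t) (Ici (t ^ 2 / 3)) := by
  have h_mode : 0 < t ^ 2 / 3 := by positivity
  refine antitoneOn_of_hasDerivWithinAt_nonpos (convex_Ici _)
    (continuousOn_levyKernel.mono fun u hu => h_mode.trans_le hu)
    (fun u hu => (hasDerivAt_levyKernel (h_mode.trans_le (interior_subset hu))).hasDerivWithinAt)
    (fun u hu => ?_)
  rw [interior_Ici] at hu
  exact mul_nonpos_of_nonneg_of_nonpos (levyKernel_nonneg _ _)
    (div_nonpos_of_nonpos_of_nonneg (by linarith [hu.out]) (by positivity))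

theorem Icc_levy_window_subset_Ioi (ht : t ≠ 0) (hd : 3 * √10 / 2 * d ≤ t ^ 2) :
    Icc (t ^ 2 / 3 - d) (t ^ 2 / 3 + d) ⊆ Ioi 0 := by
  intro u hu
  have h_sqrt : 3 ≤ √10 := le_sqrt_of_sq_le (by norm_num)
  have h_t : 0 < t ^ 2 := by positivity
  have h_d : 0 ≤ d := by linarith [hu.1, hu.2]
  show 0 < u
  nlinarith [hu.1]

theorem levyKernel_concaveOn (ht : t ≠ 0) (hd : 3 * √10 / 2 * d ≤ t ^ 2) :
    ConcaveOn ℝ (Icc (t ^ 2 / 3 - d) (t ^ 2 / 3 + d)) (levyKernel t) := by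
  have h_pos := Icc_levy_window_subset_Ioi ht hd
  -- The window lies between the roots `t²/3 ± (√10/15) t²` of `15u² - 10t²u + t⁴`.
  have h_poly : ∀ u ∈ Icc (t ^ 2 / 3 - d) (t ^ 2 / 3 + d),
      15 * u ^ 2 - 10 * t ^ 2 * u + t ^ 4 ≤ 0 := by
    intro u hu
    have h_d : 0 ≤ d := by linarith [hu.1, hu.2]
    have h_d2 : 45 * d ^ 2 ≤ 2 * t ^ 4 := by
      have := mul_le_mul hd hd (by positivity) (by positivity)
      nlinarith [sq_sqrt (show (0 : ℝ) ≤ 10 by norm_num)]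
    nlinarith [hu.1, hu.2]
  refine concaveOn_of_hasDerivWithinAt2_nonpos (convex_Icc _ _)
    (continuousOn_levyKernel.mono h_pos)
    (fun u hu => (hasDerivAt_levyKernel (h_pos (interior_subset hu))).hasDerivWithinAt)
    (fun u hu => (hasDerivAt_levyKernel_deriv (h_pos (interior_subset hu))).hasDerivWithinAt)
    (fun u hu => ?_)
  have hu_pos : 0 < u := h_pos (interior_subset hu)
  exact mul_nonpos_of_nonneg_of_nonpos (levyKernel_nonneg _ _)
    (div_nonpos_of_nonpos_of_nonneg (h_poly u (interior_subset hu)) (by positivity))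

end LevyKernel

theorem levy_convolution_unimodal_large_time
    (μ : Measure ℝ) [IsProbabilityMeasure μ]
    (hK : IsCompact (measureSupport μ)) (D : ℝ)
    (hD : D = Metric.diam (measureSupport μ))
    (t : ℝ) (ht0 : 0 < t) (ht : 3 * Real.sqrt 10 / 2 * D ≤ t ^ 2) :
    Unimodal (fun x => ∫ y, levyKernel t (x - y) ∂μ) := by
  have hS := hK.isBounded
  have h_ae : ∀ᵐ y ∂μ, y ∈ Icc (sInf (measureSupport μ)) (sSup (measureSupport μ)) :=
    (ae_mem_measureSupport μ).mono fun y hy =>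
      ⟨csInf_le hS.bddBelow hy, le_csSup hS.bddAbove hy⟩
  rw [hD, Real.diam_eq hS] at ht
  have h_window := Icc_levy_window_subset_Ioi ht0.ne' ht
  exact unimodal_integral_comp_sub h_ae (measurable_levyKernel t) (levyKernel_nonneg t)
    levyKernel_monotoneOn (levyKernel_antitoneOn ht0.ne') (levyKernel_concaveOn ht0.ne' ht)
    (continuousOn_levyKernel.mono h_window)
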